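/- Assume Assumption (β), let Ω ⊆ V and suppose M_Ω = sup{ β⁺(x)/m(x) : x ∈ Ω } < ∞; set m_Ω = inf{ β⁺(x)/m(x) : x ∈ Ω }. Then for every element λ of the numerical range of the Dirichlet Laplacian on Ω, i.e., λ = (Δf, f)_m with f finitely supported, supp f ⊆ Ω and ‖f‖_m = 1, one has m_Ω (2 − √(4 − h̃(Ω)²)) ≤ 2 Re λ ≤ M_Ω (2 + √(4 − h̃(Ω)²)). -/

import Mathlib

open Function Complex

noncomputable def betaPlus {V : Type*} (b : V → V → ℝ) (x : V) : ℝ := ∑ᶠ y, b x y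
noncomputable def betaMinus {V : Type*} (b : V → V → ℝ) (x : V) : ℝ := ∑ᶠ y, b y x

/-- The Laplacian `Δf(x) = (1/m(x)) Σ_y b(x,y)(f(x) - f(y))`; the normalized Laplacian
`Δ̃` is the case `m = β⁺`. -/
noncomputable def lap {V : Type*} (b : V → V → ℝ) (m : V → ℝ) (f : V → ℂ) (x : V) : ℂ :=
  (1 / (m x : ℂ)) * ∑ᶠ y, (b x y : ℂ) * (f x - f y)

/-- The weighted inner product `(f,g)_w = Σ_x w(x) f(x) conj(g(x))`. -/
noncomputable def innerW {V : Type*} (w : V → ℝ) (f g : V → ℂ) : ℂ :=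
  ∑ᶠ x, (w x : ℂ) * f x * (starRingEnd ℂ) (g x)

/-- The total edge-boundary weight of a finite set `U`:
`b(∂_E U) = Σ_{x∈U, y∉U} b(x,y) + Σ_{x∉U, y∈U} b(x,y)`. -/
noncomputable def bdryWeight {V : Type*} [DecidableEq V] (b : V → V → ℝ) (U : Finset V) :
    ℝ :=
  ∑ x ∈ U, ∑ᶠ y, (if y ∈ U then 0 else b x y + b y x)

/-- The Cheeger constant of `Ω ⊆ V` with respect to the weight `w`:
`h(Ω) = inf { b(∂_E U) / w(U) : U ⊆ Ω finite nonempty }`. -/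
noncomputable def cheeger {V : Type*} [DecidableEq V] (b : V → V → ℝ) (w : V → ℝ)
    (Ω : Set V) : ℝ :=
  sInf {r : ℝ | ∃ U : Finset V, U.Nonempty ∧ ↑U ⊆ Ω ∧ r = bdryWeight b U / ∑ x ∈ U, w x}

/-- The bottom of the real part of the numerical range of the Dirichlet Laplacian on `Ω`:
`ν(Δ^D_Ω) = inf { Re (Δf, f)_m : f finitely supported, supp f ⊆ Ω, ‖f‖_m = 1 }`. -/
noncomputable def nuD {V : Type*} (b : V → V → ℝ) (m : V → ℝ) (Ω : Set V) : ℝ :=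
  sInf {r : ℝ | ∃ f : V → ℂ, (support f).Finite ∧ support f ⊆ Ω ∧
    innerW m f f = 1 ∧ r = (innerW m (lap b m f) f).re}

/-!
Write `u = |f|²` and `a = Σ β⁺ u`. Since `β⁺ = β⁻`, `2 Re (Δf, f)_m = Σ b(x,y) |f x - f y|²`, which
lies between `S = Σ b (|f x| - |f y|)²` and `D = Σ b (|f x| + |f y|)²`, and `S + D = 4a`.
The discrete co-area inequality gives `h̃(Ω) a ≤ Σ b |u x - u y|`, which Cauchy–Schwarz bounds
by `√(S D) = √(S (4a - S))`. Solving this quadratic inequality in `S` yields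
`a (2 - √(4 - h̃²)) ≤ S` and `D ≤ a (2 + √(4 - h̃²))`, while `‖f‖_m = 1` makes `a` an average of
`β⁺/m` over `supp f`, so `m_Ω ≤ a ≤ M_Ω`. All sums run over a finite set containing `supp f` and
its neighbours, which exists by local finiteness.
-/

open scoped ComplexConjugate

section LayerCake

variable {V : Type*}

lemma abs_mul_indicator_add_sub {U : Set V} {v : V → ℝ} {c : ℝ} (hc : 0 ≤ c)
    (hv : ∀ x, 0 ≤ v x) (hvU : ∀ x ∉ U, v x = 0) (x y : V) :
    |(c * U.indicator 1 x + v x) - (c * U.indicator 1 y + v y)|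
      = c * |U.indicator 1 x - U.indicator 1 y| + |v x - v y| := by
  by_cases hx : x ∈ U <;> by_cases hy : y ∈ U
  · simp [hx, hy]
  · simp [hx, hy, hvU y hy, abs_of_nonneg (hv x), abs_of_nonneg (add_nonneg hc (hv x))]
  · rw [abs_sub_comm, abs_sub_comm (U.indicator 1 x), abs_sub_comm (v x)]
    simp [hx, hy, hvU x hx, abs_of_nonneg (hv y), abs_of_nonneg (add_nonneg hc (hv y))]
  · simp [hx, hy, hvU x hx, hvU y hy]

/-- The discrete co-area inequality: an isoperimetric bound for the level sets of `u` transfers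
to `u` itself. -/
theorem mul_sum_le_sum_sum_abs_sub {b : V → V → ℝ} {w : V → ℝ} {F s : Finset V} {h : ℝ}
    (hU : ∀ U ⊆ s, U.Nonempty → h * ∑ x ∈ U, w x
      ≤ ∑ x ∈ F, ∑ y ∈ F, b x y * |(U : Set V).indicator 1 x - (U : Set V).indicator 1 y|)
    {u : V → ℝ} (hu : ∀ x, 0 ≤ u x) (hus : ∀ x, u x ≠ 0 → x ∈ s) :
    h * ∑ x ∈ s, w x * u x ≤ ∑ x ∈ F, ∑ y ∈ F, b x y * |u x - u y| := by
  suffices ∀ t ⊆ s, ∀ u : V → ℝ, (∀ x, 0 ≤ u x) → (∀ x, u x ≠ 0 → x ∈ t) →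
      h * ∑ x ∈ s, w x * u x ≤ ∑ x ∈ F, ∑ y ∈ F, b x y * |u x - u y| from
    this s subset_rfl u hu hus
  classical
  refine fun t => Finset.strongInductionOn t fun t ih => ?_
  intro hts u hu hut
  by_cases hzero : ∀ x, u x = 0
  · simp [hzero]
  push Not at hzero
  -- peel off the bottom layer `c • 1_U` of `u`, where `c` is the least nonzero value of `u`
  set U := t.filter (u · ≠ 0)
  have hUne : U.Nonempty := by
    obtain ⟨x, hx⟩ := hzero
    exact ⟨x, Finset.mem_filter.mpr ⟨hut x hx, hx⟩⟩
  obtain ⟨x₀, hx₀, hmin⟩ := U.exists_min_image u hUne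
  set c := u x₀
  have hc : 0 ≤ c := hu x₀
  set v := fun x => u x - c * (U : Set V).indicator 1 x
  have huv : ∀ x, u x = c * (U : Set V).indicator 1 x + v x := fun x => by simp [v]
  have hoff : ∀ x ∉ U, u x = 0 := fun x hx => by
    by_contra hne; exact hx (Finset.mem_filter.mpr ⟨hut x hne, hne⟩)
  have hv : ∀ x, 0 ≤ v x := fun x => by
    by_cases hx : x ∈ U
    · simpa [v, hx] using hmin x hx
    · simp [v, hx, hoff x hx]
  have hvU : ∀ x ∉ U, v x = 0 := fun x hx => by simp [v, hx, hoff x hx]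
  have hvt : ∀ x, v x ≠ 0 → x ∈ U.erase x₀ := fun x hx => by
    have hxU : x ∈ U := by by_contra h'; exact hx (hvU x h')
    refine Finset.mem_erase.mpr ⟨?_, hxU⟩
    rintro rfl
    simp [v, hxU, c] at hx
  have hUs : U ⊆ s := (Finset.filter_subset _ _).trans hts
  have hsum : ∑ x ∈ s, w x * u x = c * ∑ x ∈ U, w x + ∑ x ∈ s, w x * v x := by
    simp_rw [huv, mul_add, Finset.sum_add_distrib, ← Finset.sum_indicator_subset w hUs,
      Finset.mul_sum]
    congr 1
    refine Finset.sum_congr rfl fun x _ => ?_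
    by_cases hx : x ∈ U <;> simp [hx, mul_comm]
  have hlayer : ∑ x ∈ F, ∑ y ∈ F, b x y * |u x - u y|
      = c * ∑ x ∈ F, ∑ y ∈ F,
          b x y * |(U : Set V).indicator 1 x - (U : Set V).indicator 1 y|
        + ∑ x ∈ F, ∑ y ∈ F, b x y * |v x - v y| := by
    simp_rw [huv, abs_mul_indicator_add_sub hc hv hvU, Finset.mul_sum, ← Finset.sum_add_distrib]
    refine Finset.sum_congr rfl fun x _ => Finset.sum_congr rfl fun y _ => by ring
  have hrest := ih (U.erase x₀) ((Finset.erase_ssubset hx₀).trans_subset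
    (Finset.filter_subset _ _)) ((Finset.erase_subset _ _).trans hUs) v hv hvt
  have hbottom := mul_le_mul_of_nonneg_left (hU U hUs hUne) hc
  rw [hsum, hlayer, mul_add, mul_left_comm]
  linarith

end LayerCake

section Energy

variable {V : Type*}

theorem sq_sum_sum_abs_sq_sub_sq_le {b : V → V → ℝ} (hb : ∀ x y, 0 ≤ b x y) (F : Finset V)
    (g : V → ℝ) :
    (∑ x ∈ F, ∑ y ∈ F, b x y * |g x ^ 2 - g y ^ 2|) ^ 2
      ≤ (∑ x ∈ F, ∑ y ∈ F, b x y * (g x - g y) ^ 2)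
        * ∑ x ∈ F, ∑ y ∈ F, b x y * (g x + g y) ^ 2 := by
  simp_rw [← Finset.sum_product' F F]
  refine Finset.sum_sq_le_sum_mul_sum_of_sq_le_mul _
    (fun _ _ => mul_nonneg (hb _ _) (sq_nonneg _)) (fun _ _ => mul_nonneg (hb _ _) (sq_nonneg _))
    fun _ _ => le_of_eq ?_
  rw [sq_sub_sq, abs_mul, mul_pow, mul_pow, sq_abs, sq_abs]
  ring

theorem sum_sum_sq_norm_sub_norm_le {E : Type*} [SeminormedAddCommGroup E] {b : V → V → ℝ}
    (hb : ∀ x y, 0 ≤ b x y) (F : Finset V) (f : V → E) :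
    ∑ x ∈ F, ∑ y ∈ F, b x y * (‖f x‖ - ‖f y‖) ^ 2 ≤ ∑ x ∈ F, ∑ y ∈ F, b x y * ‖f x - f y‖ ^ 2 := by
  refine Finset.sum_le_sum fun x _ => Finset.sum_le_sum fun y _ =>
    mul_le_mul_of_nonneg_left ?_ (hb x y)
  rw [← sq_abs]
  exact pow_le_pow_left₀ (abs_nonneg _) (abs_norm_sub_norm_le _ _) 2

theorem sum_sum_sq_norm_sub_le {E : Type*} [SeminormedAddCommGroup E] {b : V → V → ℝ}
    (hb : ∀ x y, 0 ≤ b x y) (F : Finset V) (f : V → E) :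
    ∑ x ∈ F, ∑ y ∈ F, b x y * ‖f x - f y‖ ^ 2 ≤ ∑ x ∈ F, ∑ y ∈ F, b x y * (‖f x‖ + ‖f y‖) ^ 2 := by
  gcongr with x _ y _
  · exact hb x y
  · exact norm_sub_le _ _

end Energy

theorem mul_two_sub_sqrt_le_and_le_mul_two_add_sqrt {c C a S P D h : ℝ} (hca : c ≤ a)
    (haC : a ≤ C) (ha : 0 ≤ a) (hSP : S ≤ P) (hPD : P ≤ D) (hSD : S + D = 4 * a)
    (hha : (h * a) ^ 2 ≤ S * D) :
    c * (2 - √(4 - h ^ 2)) ≤ P ∧ P ≤ C * (2 + √(4 - h ^ 2)) := by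
  have hs : √(4 - h ^ 2) ≤ 2 := Real.sqrt_le_iff.mpr ⟨by norm_num, by nlinarith [sq_nonneg h]⟩
  have hs₀ : 0 ≤ √(4 - h ^ 2) := Real.sqrt_nonneg _
  -- `(2a - S)² = 4a² - S D` since `D = 4a - S`
  have hdev : |2 * a - S| ≤ √(4 - h ^ 2) * a := by
    nth_rw 2 [← Real.sqrt_sq ha]
    rw [← Real.sqrt_mul' _ (sq_nonneg a)]
    exact Real.abs_le_sqrt (by nlinarith)
  obtain ⟨hlo, hhi⟩ := abs_le.mp hdev
  constructor <;> nlinarith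

section Cheeger

variable {V : Type*} {b : V → V → ℝ}

theorem betaPlus_nonneg (hb : ∀ x y, 0 ≤ b x y) (x : V) : 0 ≤ betaPlus b x :=
  finsum_nonneg fun y => hb x y

variable [DecidableEq V]

theorem bdryWeight_nonneg (hb : ∀ x y, 0 ≤ b x y) (U : Finset V) : 0 ≤ bdryWeight b U :=
  Finset.sum_nonneg fun x _ => finsum_nonneg fun y => by
    split_ifs
    exacts [le_rfl, add_nonneg (hb x y) (hb y x)]

variable {w : V → ℝ} {Ω : Set V}

theorem cheeger_nonneg (hb : ∀ x y, 0 ≤ b x y) (hw : ∀ x, 0 ≤ w x) : 0 ≤ cheeger b w Ω :=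
  Real.sInf_nonneg <| by
    rintro _ ⟨U, -, -, rfl⟩
    exact div_nonneg (bdryWeight_nonneg hb U) (Finset.sum_nonneg fun x _ => hw x)

theorem cheeger_mul_sum_le (hb : ∀ x y, 0 ≤ b x y) (hw : ∀ x, 0 ≤ w x) {U : Finset V}
    (hne : U.Nonempty) (hUΩ : ↑U ⊆ Ω) : cheeger b w Ω * ∑ x ∈ U, w x ≤ bdryWeight b U := by
  have hbdd : BddBelow {r : ℝ | ∃ U : Finset V, U.Nonempty ∧ ↑U ⊆ Ω ∧
      r = bdryWeight b U / ∑ x ∈ U, w x} := by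
    refine ⟨0, ?_⟩
    rintro _ ⟨U, -, -, rfl⟩
    exact div_nonneg (bdryWeight_nonneg hb U) (Finset.sum_nonneg fun x _ => hw x)
  have hle : cheeger b w Ω ≤ bdryWeight b U / ∑ x ∈ U, w x := csInf_le hbdd ⟨U, hne, hUΩ, rfl⟩
  rcases (Finset.sum_nonneg fun x (_ : x ∈ U) => hw x).eq_or_lt with hzero | hpos
  · simpa [← hzero] using bdryWeight_nonneg hb U
  · exact (le_div_iff₀ hpos).mp hle

end Cheeger

theorem two_mul_re_sub_mul_conj (z w : ℂ) :
    2 * ((z - w) * conj z).re = ‖z‖ ^ 2 - ‖w‖ ^ 2 + ‖z - w‖ ^ 2 := by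
  simp only [Complex.sq_norm, Complex.normSq_apply, Complex.mul_re, Complex.sub_re,
    Complex.sub_im, Complex.conj_re, Complex.conj_im]
  ring

theorem innerW_self_eq_sum {V : Type*} {w : V → ℝ} {f : V → ℂ} {K : Finset V}
    (hf : support f ⊆ K) : innerW w f f = ↑(∑ x ∈ K, w x * ‖f x‖ ^ 2) := by
  rw [innerW, finsum_eq_finsetSum_of_support_subset _ (s := K) fun x hx => hf fun hfx =>
    hx (by simp [hfx])]
  push_cast
  refine Finset.sum_congr rfl fun x _ => ?_
  rw [mul_assoc, Complex.mul_conj, Complex.normSq_eq_norm_sq]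
  norm_cast

section FiniteNeighbourhood

variable {V : Type*} {b : V → V → ℝ}

theorem exists_finset_neighbourhood (hloc : ∀ x, {y | b x y ≠ 0 ∨ b y x ≠ 0}.Finite)
    (K : Finset V) : ∃ F : Finset V, K ⊆ F ∧ ∀ x ∈ K, ∀ y, (b x y ≠ 0 ∨ b y x ≠ 0) → y ∈ F := by
  classical
  refine ⟨K ∪ K.biUnion fun x => (hloc x).toFinset, Finset.subset_union_left, ?_⟩
  intro x hx y hy
  exact Finset.mem_union_right _ (Finset.mem_biUnion.mpr ⟨x, hx, (hloc x).mem_toFinset.mpr hy⟩)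

variable {K F : Finset V} (hKF : K ⊆ F)
  (hF : ∀ x ∈ K, ∀ y, (b x y ≠ 0 ∨ b y x ≠ 0) → y ∈ F)
include hF

theorem betaPlus_eq_sum {x : V} (hx : x ∈ K) : betaPlus b x = ∑ y ∈ F, b x y :=
  finsum_eq_finsetSum_of_support_subset _ fun y hy => hF x hx y (Or.inl hy)

theorem betaMinus_eq_sum {x : V} (hx : x ∈ K) : betaMinus b x = ∑ y ∈ F, b y x :=
  finsum_eq_finsetSum_of_support_subset _ fun y hy => hF x hx y (Or.inr hy)

include hKF

theorem sum_sum_mul_left_eq {c : V → ℝ} (hc : ∀ x, c x ≠ 0 → x ∈ K) :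
    ∑ x ∈ F, ∑ y ∈ F, b x y * c x = ∑ x ∈ K, betaPlus b x * c x := by
  simp_rw [← Finset.sum_mul]
  refine (Finset.sum_subset hKF fun x _ hx => ?_).symm.trans
    (Finset.sum_congr rfl fun x hx => by rw [betaPlus_eq_sum hF hx])
  rw [show c x = 0 by by_contra h; exact hx (hc x h), mul_zero]

theorem sum_sum_mul_right_eq (hβ : ∀ x, betaPlus b x = betaMinus b x) {c : V → ℝ}
    (hc : ∀ x, c x ≠ 0 → x ∈ K) :
    ∑ x ∈ F, ∑ y ∈ F, b x y * c y = ∑ x ∈ K, betaPlus b x * c x := by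
  rw [Finset.sum_comm]
  simp_rw [← Finset.sum_mul]
  refine (Finset.sum_subset hKF fun x _ hx => ?_).symm.trans
    (Finset.sum_congr rfl fun x hx => by rw [hβ, betaMinus_eq_sum hF hx])
  rw [show c x = 0 by by_contra h; exact hx (hc x h), mul_zero]

theorem sum_sum_sq_sub_add_sum_sum_sq_add (hβ : ∀ x, betaPlus b x = betaMinus b x)
    {g : V → ℝ} (hg : ∀ x, g x ≠ 0 → x ∈ K) :
    ∑ x ∈ F, ∑ y ∈ F, b x y * (g x - g y) ^ 2 + ∑ x ∈ F, ∑ y ∈ F, b x y * (g x + g y) ^ 2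
      = 4 * ∑ x ∈ K, betaPlus b x * g x ^ 2 := by
  have hg2 : ∀ x, g x ^ 2 ≠ 0 → x ∈ K := fun x hx => hg x (pow_ne_zero_iff two_ne_zero |>.mp hx)
  have hpair : ∀ x y, b x y * (g x - g y) ^ 2 + b x y * (g x + g y) ^ 2
      = 2 * (b x y * g x ^ 2) + 2 * (b x y * g y ^ 2) := fun x y => by ring
  simp_rw [← Finset.sum_add_distrib, hpair, Finset.sum_add_distrib, ← Finset.mul_sum,
    sum_sum_mul_left_eq hKF hF hg2, sum_sum_mul_right_eq hKF hF hβ hg2]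
  ring

theorem innerW_lap_eq_sum {m : V → ℝ} (hm : ∀ x, m x ≠ 0) {f : V → ℂ}
    (hf : support f ⊆ K) :
    innerW m (lap b m f) f = ∑ x ∈ F, ∑ y ∈ F, (b x y : ℂ) * (f x - f y) * conj (f x) := by
  rw [innerW, finsum_eq_finsetSum_of_support_subset _ (s := F) fun x hx => ?_]
  · refine Finset.sum_congr rfl fun x _ => ?_
    rw [← Finset.sum_mul]
    by_cases hfx : f x = 0
    · simp [hfx]
    have hx : x ∈ K := hf hfx
    rw [lap, finsum_eq_finsetSum_of_support_subset _ (s := F) fun y hy => hF x hx y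
      (Or.inl fun h => hy (by simp [h]))]
    field_simp [Complex.ofReal_ne_zero.mpr (hm x)]
  · exact hKF (hf fun hfx => hx (by simp [hfx]))

theorem two_mul_re_innerW_lap (hβ : ∀ x, betaPlus b x = betaMinus b x) {m : V → ℝ}
    (hm : ∀ x, m x ≠ 0) {f : V → ℂ} (hf : support f ⊆ K) :
    2 * (innerW m (lap b m f) f).re = ∑ x ∈ F, ∑ y ∈ F, b x y * ‖f x - f y‖ ^ 2 := by
  have hu : ∀ x, ‖f x‖ ^ 2 ≠ 0 → x ∈ K := fun x hx => hf fun hfx => hx (by simp [hfx])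
  have hpair : ∀ x y, 2 * ((b x y : ℂ) * (f x - f y) * conj (f x)).re
      = (b x y * ‖f x‖ ^ 2 - b x y * ‖f y‖ ^ 2) + b x y * ‖f x - f y‖ ^ 2 := fun x y => by
    rw [mul_assoc, Complex.re_ofReal_mul, mul_left_comm, two_mul_re_sub_mul_conj]
    ring
  -- by `β⁺ = β⁻` the `‖f x‖² - ‖f y‖²` terms cancel in the double sum
  simp_rw [innerW_lap_eq_sum hKF hF hm hf, Complex.re_sum, Finset.mul_sum, hpair,
    Finset.sum_add_distrib, Finset.sum_sub_distrib, sum_sum_mul_left_eq hKF hF hu,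
    sum_sum_mul_right_eq hKF hF hβ hu, sub_self, zero_add]

theorem bdryWeight_eq_sum [DecidableEq V] {U : Finset V} (hU : U ⊆ K) :
    bdryWeight b U
      = ∑ x ∈ F, ∑ y ∈ F, b x y * |(U : Set V).indicator 1 x - (U : Set V).indicator 1 y| := by
  have hcut : ∀ x y, b x y * |(U : Set V).indicator 1 x - (U : Set V).indicator 1 y|
      = (if x ∈ U ∧ y ∉ U then b x y else 0) + (if y ∈ U ∧ x ∉ U then b x y else 0) :=
    fun x y => by by_cases hx : x ∈ U <;> by_cases hy : y ∈ U <;> simp [hx, hy]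
  have hrow : ∀ x ∈ U, ∑ᶠ y, (if y ∈ U then 0 else b x y + b y x)
      = ∑ y ∈ F, (if y ∈ U then 0 else b x y + b y x) := fun x hx =>
    finsum_eq_finsetSum_of_support_subset _ fun y hy => by
      by_cases hyU : y ∈ U
      · simp [hyU] at hy
      refine hF x (hU hx) y (not_and_or.mp fun h => hy ?_)
      simp [hyU, h.1, h.2]
  simp_rw [hcut, Finset.sum_add_distrib]
  rw [Finset.sum_comm (f := fun x y => if y ∈ U ∧ x ∉ U then b x y else 0),
    ← Finset.sum_add_distrib, bdryWeight, Finset.sum_congr rfl hrow,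
    ← Finset.sum_subset (hU.trans hKF) fun x _ hx => by simp [hx]]
  refine Finset.sum_congr rfl fun x hx => ?_
  rw [← Finset.sum_add_distrib]
  refine Finset.sum_congr rfl fun y _ => ?_
  by_cases hy : y ∈ U <;> simp [hx, hy]

theorem cheeger_mul_sum_le_sum_sum_abs_sub [DecidableEq V] (hb : ∀ x y, 0 ≤ b x y)
    {Ω : Set V} (hKΩ : ↑K ⊆ Ω) {u : V → ℝ} (hu : ∀ x, 0 ≤ u x) (huK : ∀ x, u x ≠ 0 → x ∈ K) :
    cheeger b (betaPlus b) Ω * ∑ x ∈ K, betaPlus b x * u x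
      ≤ ∑ x ∈ F, ∑ y ∈ F, b x y * |u x - u y| :=
  mul_sum_le_sum_sum_abs_sub (fun _ hU hne =>
    (cheeger_mul_sum_le hb (betaPlus_nonneg hb) hne
      ((Finset.coe_subset.mpr hU).trans hKΩ)).trans_eq (bdryWeight_eq_sum hKF hF hU)) hu huK

theorem sq_cheeger_mul_le [DecidableEq V] (hb : ∀ x y, 0 ≤ b x y) {Ω : Set V} (hKΩ : ↑K ⊆ Ω)
    {g : V → ℝ} (hg : ∀ x, g x ≠ 0 → x ∈ K) :
    (cheeger b (betaPlus b) Ω * ∑ x ∈ K, betaPlus b x * g x ^ 2) ^ 2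
      ≤ (∑ x ∈ F, ∑ y ∈ F, b x y * (g x - g y) ^ 2)
        * ∑ x ∈ F, ∑ y ∈ F, b x y * (g x + g y) ^ 2 :=
  calc _ ≤ (∑ x ∈ F, ∑ y ∈ F, b x y * |g x ^ 2 - g y ^ 2|) ^ 2 :=
        pow_le_pow_left₀ (mul_nonneg (cheeger_nonneg hb (betaPlus_nonneg hb))
          (Finset.sum_nonneg fun x _ => mul_nonneg (betaPlus_nonneg hb x) (sq_nonneg _)))
          (cheeger_mul_sum_le_sum_sum_abs_sub hKF hF hb hKΩ (fun _ => sq_nonneg _)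
            fun x hx => hg x (pow_ne_zero_iff two_ne_zero |>.mp hx)) 2
    _ ≤ _ := sq_sum_sum_abs_sq_sub_sq_le hb F g

end FiniteNeighbourhood

section WeightedAverage

variable {V : Type*} {s : Finset V} {φ m u : V → ℝ} {c : ℝ}

theorem le_sum_mul_of_le_div (hm : ∀ x, 0 < m x) (hu : ∀ x, 0 ≤ u x)
    (hc : ∀ x ∈ s, u x ≠ 0 → c ≤ φ x / m x) (hmass : ∑ x ∈ s, m x * u x = 1) :
    c ≤ ∑ x ∈ s, φ x * u x := by
  rw [← mul_one c, ← hmass, Finset.mul_sum]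
  refine Finset.sum_le_sum fun x hx => ?_
  by_cases hux : u x = 0
  · simp [hux]
  rw [← mul_assoc]
  exact mul_le_mul_of_nonneg_right ((le_div_iff₀ (hm x)).mp (hc x hx hux)) (hu x)

theorem sum_mul_le_of_div_le (hm : ∀ x, 0 < m x) (hu : ∀ x, 0 ≤ u x)
    (hc : ∀ x ∈ s, u x ≠ 0 → φ x / m x ≤ c) (hmass : ∑ x ∈ s, m x * u x = 1) :
    ∑ x ∈ s, φ x * u x ≤ c := by
  rw [← mul_one c, ← hmass, Finset.mul_sum]
  refine Finset.sum_le_sum fun x hx => ?_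
  by_cases hux : u x = 0
  · simp [hux]
  rw [← mul_assoc]
  exact mul_le_mul_of_nonneg_right ((div_le_iff₀ (hm x)).mp (hc x hx hux)) (hu x)

end WeightedAverage

theorem numerical_range_cheeger_bounds_general
    (V : Type*) [DecidableEq V] (b : V → V → ℝ) (m : V → ℝ)
    (hb_nonneg : ∀ x y, 0 ≤ b x y)
    (hloc_fin : ∀ x, {y | b x y ≠ 0 ∨ b y x ≠ 0}.Finite)
    (hm_pos : ∀ x, 0 < m x)
    (hβ : ∀ x, betaPlus b x = betaMinus b x)
    (Ω : Set V)
    (hM : BddAbove {r : ℝ | ∃ x ∈ Ω, r = betaPlus b x / m x})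
    (f : V → ℂ) (hf : (support f).Finite) (hfΩ : support f ⊆ Ω)
    (hnorm : innerW m f f = 1) :
    sInf {r : ℝ | ∃ x ∈ Ω, r = betaPlus b x / m x} *
        (2 - Real.sqrt (4 - (cheeger b (betaPlus b) Ω) ^ 2))
      ≤ 2 * (innerW m (lap b m f) f).re ∧
    2 * (innerW m (lap b m f) f).re
      ≤ sSup {r : ℝ | ∃ x ∈ Ω, r = betaPlus b x / m x} *
          (2 + Real.sqrt (4 - (cheeger b (betaPlus b) Ω) ^ 2)) := by
  set K := hf.toFinset
  have hfK : support f ⊆ K := hf.coe_toFinset.symm.subset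
  have hKΩ : ↑K ⊆ Ω := hf.coe_toFinset.subset.trans hfΩ
  obtain ⟨F, hKF, hF⟩ := exists_finset_neighbourhood hloc_fin K
  have hgK : ∀ x, ‖f x‖ ≠ 0 → x ∈ K := fun x hx => hfK (norm_ne_zero_iff.mp hx)
  have hmass : ∑ x ∈ K, m x * ‖f x‖ ^ 2 = 1 := by
    exact_mod_cast (innerW_self_eq_sum hfK).symm.trans hnorm
  have hΩ : ∀ x ∈ K, ‖f x‖ ^ 2 ≠ 0 → x ∈ Ω := fun x hx _ => hKΩ hx
  have hbdd : BddBelow {r : ℝ | ∃ x ∈ Ω, r = betaPlus b x / m x} := ⟨0, by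
    rintro _ ⟨x, -, rfl⟩
    exact div_nonneg (betaPlus_nonneg hb_nonneg x) (hm_pos x).le⟩
  rw [two_mul_re_innerW_lap hKF hF hβ (fun x => (hm_pos x).ne') hfK]
  exact mul_two_sub_sqrt_le_and_le_mul_two_add_sqrt
    (le_sum_mul_of_le_div hm_pos (fun _ => sq_nonneg _)
      (fun x hx hux => csInf_le hbdd ⟨x, hΩ x hx hux, rfl⟩) hmass)
    (sum_mul_le_of_div_le hm_pos (fun _ => sq_nonneg _)
      (fun x hx hux => le_csSup hM ⟨x, hΩ x hx hux, rfl⟩) hmass)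
    (Finset.sum_nonneg fun x _ => mul_nonneg (betaPlus_nonneg hb_nonneg x) (sq_nonneg _))
    (sum_sum_sq_norm_sub_norm_le hb_nonneg F f) (sum_sum_sq_norm_sub_le hb_nonneg F f)
    (sum_sum_sq_sub_add_sum_sum_sq_add hKF hF hβ hgK) (sq_cheeger_mul_le hKF hF hb_nonneg hKΩ hgK)

/-- assume Assumption (β), let `Ω ⊆ V` with
`M_Ω = sup { β⁺(x)/m(x) : x ∈ Ω } < ∞` and `m_Ω = inf { β⁺(x)/m(x) : x ∈ Ω }`. Then for
every element `λ = (Δf, f)_m` of the numerical range of the Dirichlet Laplacian on `Ω`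
(`f` finitely supported, `supp f ⊆ Ω`, `‖f‖_m = 1`) one has
`m_Ω (2 − √(4 − h̃(Ω)²)) ≤ 2 Re λ ≤ M_Ω (2 + √(4 − h̃(Ω)²))`. -/
theorem numerical_range_cheeger_bounds
    (V : Type*) [Countable V] [DecidableEq V] (b : V → V → ℝ) (m : V → ℝ)
    (hb_nonneg : ∀ x y, 0 ≤ b x y)
    (hb_loop : ∀ x, b x x = 0)
    (hloc_fin : ∀ x, {y | b x y ≠ 0 ∨ b y x ≠ 0}.Finite)
    (hm_pos : ∀ x, 0 < m x)
    (hβp_pos : ∀ x, 0 < betaPlus b x)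
    (hβm_pos : ∀ x, 0 < betaMinus b x)
    (hβ : ∀ x, betaPlus b x = betaMinus b x)
    (Ω : Set V)
    (hM : BddAbove {r : ℝ | ∃ x ∈ Ω, r = betaPlus b x / m x})
    (f : V → ℂ) (hf : (support f).Finite) (hfΩ : support f ⊆ Ω)
    (hnorm : innerW m f f = 1) :
    sInf {r : ℝ | ∃ x ∈ Ω, r = betaPlus b x / m x} *
        (2 - Real.sqrt (4 - (cheeger b (betaPlus b) Ω) ^ 2))
      ≤ 2 * (innerW m (lap b m f) f).re ∧
    2 * (innerW m (lap b m f) f).re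
      ≤ sSup {r : ℝ | ∃ x ∈ Ω, r = betaPlus b x / m x} *
          (2 + Real.sqrt (4 - (cheeger b (betaPlus b) Ω) ^ 2)) :=
  numerical_range_cheeger_bounds_general V b m hb_nonneg hloc_fin hm_pos hβ Ω hM f hf hfΩ hnorm
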